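/- arXiv:2502.18053 — 2 statements merged into one kernel-verified Lean document; each statement's English description precedes it below -/
import Mathlib

section
/- Let $F$ be a finite extension of $\mathbf{Q}_p$ with ring of integers $o_F$, uniformizer $\pi$ and residue cardinality $q$, and let $[\pi](X) = \pi X + X^q$ define the Lubin--Tate formal group. With $\phi(f)(X) = f([\pi](X))$, the ring $o_F[[X]]$ is a free $\phi(o_F[[X]])$-module with basis $1, X, \dots, X^{q-1}$. -/
/-!
Reducing modulo `π` turns `πX + X^q` into `X^q`, and `∑ᵢ Xⁱ fᵢ(X^q)` merely distributes the
coefficients of a series according to their exponents modulo `q`; so `w ↦ ∑ᵢ Xⁱ φ(wᵢ)` is an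
`o_F`-linear map that is bijective modulo `π`. Since `π` is a non-zero-divisor and `o_F` is
`π`-adically complete, it is bijective.

The `π`-adic completeness of `o_F` is inherited from its `p`-adic completeness (`o_F` is finite
free over `ℤ_p`) because the two adic topologies agree: `p^v ∈ (π)` since `(π) ∩ ℤ_p ≠ 0`, and
`π^m ∈ (p)` since some power of `π` is idempotent in the finite ring `o_F/p`, and by Hensel an
idempotent lifts to `0` or `1` in the domain `o_F`, the latter being excluded as `π` is not a unit.
-/

open PowerSeries

/-- Composition `f(g(X))` of formal power series (valid when `g` has zero constant term):
the coefficient of `X^m` in `∑ n, f_n g(X)^n` only involves `n ≤ m`. -/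
noncomputable def PSComp {R : Type*} [CommRing R] (f g : PowerSeries R) : PowerSeries R :=
  PowerSeries.mk fun m => ∑ n ∈ Finset.range (m + 1),
    PowerSeries.coeff (R := R) m (PowerSeries.C (R := R) (PowerSeries.coeff (R := R) n f) * g ^ n)

section AdicPrincipal

variable {R : Type*} [CommRing R] (π : R)

theorem mem_span_singleton_smul_top_iff {M : Type*} [AddCommGroup M] [Module R M] {x : M} :
    x ∈ (Ideal.span {π} • ⊤ : Submodule R M) ↔ ∃ y, x = π • y := by
  simp [Submodule.ideal_span_singleton_smul, Submodule.mem_smul_pointwise_iff_exists, eq_comm]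

theorem smodEq_span_singleton_pow_iff {M : Type*} [AddCommGroup M] [Module R M] {n : ℕ}
    {x y : M} :
    x ≡ y [SMOD (Ideal.span {π} ^ n • ⊤ : Submodule R M)] ↔ ∃ z, x - y = π ^ n • z := by
  rw [SModEq.sub_mem, Ideal.span_singleton_pow, mem_span_singleton_smul_top_iff]

variable {ι : Type*} {M : ι → Type*} [∀ i, AddCommGroup (M i)] [∀ i, Module R (M i)]

instance Pi.isPrecomplete_span_singleton [∀ i, IsPrecomplete (Ideal.span {π}) (M i)] :
    IsPrecomplete (Ideal.span {π}) (∀ i, M i) := by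
  refine ⟨fun f hf => ?_⟩
  have hcomp (i : ι) : ∀ {m n}, m ≤ n →
      f m i ≡ f n i [SMOD (Ideal.span {π} ^ m • ⊤ : Submodule R (M i))] := fun hmn => by
    obtain ⟨z, hz⟩ := (smodEq_span_singleton_pow_iff π).1 (hf hmn)
    exact (smodEq_span_singleton_pow_iff π).2 ⟨z i, congr_fun hz i⟩
  choose L hL using fun i => IsPrecomplete.prec inferInstance (hcomp i)
  refine ⟨L, fun n => (smodEq_span_singleton_pow_iff π).2 ?_⟩
  choose z hz using fun i => (smodEq_span_singleton_pow_iff π).1 (hL i n)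
  exact ⟨z, funext hz⟩

instance Pi.isHausdorff_span_singleton [∀ i, IsHausdorff (Ideal.span {π}) (M i)] :
    IsHausdorff (Ideal.span {π}) (∀ i, M i) := by
  refine ⟨fun x hx => funext fun i =>
    IsHausdorff.haus (I := Ideal.span {π}) inferInstance (x i) fun n => ?_⟩
  obtain ⟨z, hz⟩ := (smodEq_span_singleton_pow_iff π).1 (hx n)
  exact (smodEq_span_singleton_pow_iff π).2 ⟨z i, congr_fun hz i⟩

instance PowerSeries.isPrecomplete_span_singleton [IsPrecomplete (Ideal.span {π}) R] :
    IsPrecomplete (Ideal.span {π}) R⟦X⟧ :=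
  inferInstanceAs (IsPrecomplete _ ((Unit →₀ ℕ) → R))

instance PowerSeries.isHausdorff_span_singleton [IsHausdorff (Ideal.span {π}) R] :
    IsHausdorff (Ideal.span {π}) R⟦X⟧ :=
  inferInstanceAs (IsHausdorff _ ((Unit →₀ ℕ) → R))

theorem injective_of_ker_le_smul_top {M N : Type*} [AddCommGroup M] [Module R M]
    [AddCommGroup N] [Module R N] [IsHausdorff (Ideal.span {π}) M] {f : M →ₗ[R] N}
    (hN : IsSMulRegular N π) (hf : ∀ x, f x = 0 → ∃ y, x = π • y) :
    Function.Injective f := by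
  refine (injective_iff_map_eq_zero f).2 fun x hx => ?_
  have hdiv (n : ℕ) : ∃ y, x = π ^ n • y ∧ f y = 0 := by
    induction n with
    | zero => exact ⟨x, by simp, hx⟩
    | succ n ih =>
      obtain ⟨y, rfl, hy⟩ := ih
      obtain ⟨z, rfl⟩ := hf y hy
      exact ⟨z, by rw [smul_smul, pow_succ], hN (by simpa using hy)⟩
  refine IsHausdorff.haus (I := Ideal.span {π}) inferInstance x fun n => ?_
  obtain ⟨y, hy, -⟩ := hdiv n
  exact (smodEq_span_singleton_pow_iff π).2 ⟨y, by simpa using hy⟩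

end AdicPrincipal

namespace PowerSeries

variable {R : Type*} [CommRing R]

theorem _root_.IsSMulRegular.powerSeries {π : R} (hπ : IsSMulRegular R π) :
    IsSMulRegular R⟦X⟧ π :=
  Pi.isSMulRegular_iff.2 fun _ => hπ

theorem coeff_PSComp (f g : R⟦X⟧) (m : ℕ) :
    coeff m (PSComp f g) = ∑ n ∈ Finset.range (m + 1), coeff n f * coeff m (g ^ n) := by
  simp [PSComp, coeff_C_mul]

theorem PSComp_add (f f' g : R⟦X⟧) : PSComp (f + f') g = PSComp f g + PSComp f' g := by
  ext m
  simp [coeff_PSComp, add_mul, Finset.sum_add_distrib]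

theorem PSComp_smul (c : R) (f g : R⟦X⟧) : PSComp (c • f) g = c • PSComp f g := by
  ext m
  simp [coeff_PSComp, Finset.mul_sum, mul_assoc]

theorem map_PSComp {S : Type*} [CommRing S] (φ : R →+* S) (f g : R⟦X⟧) :
    map φ (PSComp f g) = PSComp (map φ f) (map φ g) := by
  ext m
  simp [coeff_PSComp, ← map_pow]

theorem coeff_PSComp_X_pow {q : ℕ} (hq : 0 < q) (h : R⟦X⟧) (m : ℕ) :
    coeff m (PSComp h (X ^ q)) = if q ∣ m then coeff (m / q) h else 0 := by
  simp_rw [coeff_PSComp, ← pow_mul, coeff_X_pow]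
  split_ifs with hd
  · obtain ⟨k, rfl⟩ := hd
    rw [Finset.sum_eq_single k (fun n _ hn => by simp [hq.ne', hn.symm])
      (fun hk => absurd (Finset.mem_range.2 (by nlinarith)) hk)]
    simp [hq.ne']
  · refine Finset.sum_eq_zero fun n _ => ?_
    rw [if_neg (by rintro rfl; exact hd (dvd_mul_right q n)), mul_zero]

noncomputable def sumXPowComp (q : ℕ) (g : R⟦X⟧) :
    (Fin q → R⟦X⟧) →ₗ[R] R⟦X⟧ where
  toFun w := ∑ i : Fin q, X ^ (i : ℕ) * PSComp (w i) g
  map_add' v w := by simp [PSComp_add, mul_add, Finset.sum_add_distrib]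
  map_smul' c w := by simp [PSComp_smul, Finset.smul_sum]

theorem sumXPowComp_apply (q : ℕ) (g : R⟦X⟧) (w : Fin q → R⟦X⟧) :
    sumXPowComp q g w = ∑ i : Fin q, X ^ (i : ℕ) * PSComp (w i) g :=
  rfl

theorem map_sumXPowComp {S : Type*} [CommRing S] (φ : R →+* S) (q : ℕ) (g : R⟦X⟧)
    (w : Fin q → R⟦X⟧) :
    map φ (sumXPowComp q g w) = sumXPowComp q (map φ g) (fun i => map φ (w i)) := by
  simp [sumXPowComp_apply, map_PSComp]

theorem coeff_sumXPowComp_X_pow {q : ℕ} (hq : 0 < q) (w : Fin q → R⟦X⟧) (m : ℕ) :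
    coeff m (sumXPowComp q (X ^ q) w) = coeff (m / q) (w ⟨m % q, Nat.mod_lt m hq⟩) := by
  have hdvd {i : ℕ} (hi : i < q) (him : i ≤ m) : q ∣ m - i ↔ i = m % q := by
    rw [← Nat.modEq_iff_dvd' him, Nat.ModEq, Nat.mod_eq_of_lt hi]
  rw [sumXPowComp_apply, map_sum, Finset.sum_eq_single ⟨m % q, Nat.mod_lt m hq⟩]
  · rw [coeff_X_pow_mul', if_pos (Nat.mod_le m q), coeff_PSComp_X_pow hq,
      if_pos ((hdvd (Nat.mod_lt m hq) (Nat.mod_le m q)).2 rfl)]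
    congr 1
    have := Nat.div_add_mod m q
    rw [Nat.div_eq_of_eq_mul_right hq (by omega : m - m % q = q * (m / q))]
  · intro i _ hi
    rw [coeff_X_pow_mul', coeff_PSComp_X_pow hq]
    split_ifs with him hd
    · exact absurd (Fin.ext ((hdvd i.isLt him).1 hd)) hi
    · rfl
    · rfl
  · simp

noncomputable def multisection (q : ℕ) (h : R⟦X⟧) (i : Fin q) : R⟦X⟧ :=
  mk fun n => coeff (q * n + i) h

theorem map_multisection {S : Type*} [CommRing S] (φ : R →+* S) (q : ℕ) (h : R⟦X⟧)
    (i : Fin q) : map φ (multisection q h i) = multisection q (map φ h) i := by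
  ext n
  simp [multisection]

theorem sumXPowComp_X_pow_multisection {q : ℕ} (hq : 0 < q) (h : R⟦X⟧) :
    sumXPowComp q (X ^ q) (multisection q h) = h := by
  ext m
  rw [coeff_sumXPowComp_X_pow hq, multisection, coeff_mk, Nat.div_add_mod]

theorem multisection_sumXPowComp_X_pow {q : ℕ} (hq : 0 < q) (w : Fin q → R⟦X⟧) :
    multisection q (sumXPowComp q (X ^ q) w) = w := by
  ext i n
  have hi : (q * n + i) % q = i := by rw [Nat.mul_add_mod, Nat.mod_eq_of_lt i.isLt]
  have hn : (q * n + i) / q = n := by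
    rw [Nat.mul_add_div hq, Nat.div_eq_of_lt i.isLt, add_zero]
  simp only [multisection, coeff_mk, coeff_sumXPowComp_X_pow hq, hi, hn]

theorem map_mk_span_singleton_eq_zero_iff {π : R} {f : R⟦X⟧} :
    map (Ideal.Quotient.mk (Ideal.span {π})) f = 0 ↔ ∃ y, f = π • y := by
  constructor
  · intro hf
    have hmem (n : ℕ) : coeff n f ∈ Ideal.span {π} := by
      simpa [Ideal.Quotient.eq_zero_iff_mem] using congr_arg (coeff n) hf
    choose c hc using fun n => Ideal.mem_span_singleton'.1 (hmem n)
    exact ⟨mk c, by ext n; simp [← hc n, mul_comm]⟩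
  · rintro ⟨y, rfl⟩
    ext n
    simp

theorem sumXPowComp_bijective {π : R} [IsAdicComplete (Ideal.span {π}) R]
    (hπ : IsSMulRegular R π) {q : ℕ} (hq : 0 < q) {g : R⟦X⟧}
    (hg : map (Ideal.Quotient.mk (Ideal.span {π})) g = X ^ q) :
    Function.Bijective (sumXPowComp q g) := by
  set ρ := map (Ideal.Quotient.mk (Ideal.span {π}))
  have hρ (w : Fin q → R⟦X⟧) :
      ρ (sumXPowComp q g w) = sumXPowComp q (X ^ q) (fun i => ρ (w i)) := by
    rw [map_sumXPowComp, hg]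
  constructor
  · refine injective_of_ker_le_smul_top π hπ.powerSeries fun w hw => ?_
    have hw0 : (fun i => ρ (w i)) = 0 := by
      rw [← multisection_sumXPowComp_X_pow hq fun i => ρ (w i), ← hρ, hw, map_zero]
      ext i n
      simp [multisection]
    choose y hy using fun i => map_mk_span_singleton_eq_zero_iff.1 (congr_fun hw0 i)
    exact ⟨y, funext hy⟩
  · refine surjective_of_mkQ_comp_surjective (I := Ideal.span {π}) ?_
    intro y
    obtain ⟨h, rfl⟩ := Submodule.Quotient.mk_surjective _ y
    refine ⟨multisection q h, ?_⟩
    rw [LinearMap.comp_apply, Submodule.mkQ_apply, Submodule.Quotient.eq,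
      mem_span_singleton_smul_top_iff, ← map_mk_span_singleton_eq_zero_iff, map_sub, hρ]
    simp_rw [ρ, map_multisection]
    rw [sumXPowComp_X_pow_multisection hq, sub_self]

end PowerSeries

section AdicComparison

variable {R : Type*} [CommRing R] {I J : Ideal R} {M N : Type*} [AddCommGroup M] [Module R M]
  [AddCommGroup N] [Module R N]

theorem IsPrecomplete.of_linearEquiv [IsPrecomplete I M] (e : M ≃ₗ[R] N) :
    IsPrecomplete I N := by
  refine ⟨fun f hf => ?_⟩
  obtain ⟨L, hL⟩ := IsPrecomplete.prec (I := I) inferInstance (f := fun n => e.symm (f n))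
    fun hmn => by
      simpa [Submodule.map_smul'', LinearEquiv.range] using (hf hmn).map (e.symm : N →ₗ[R] M)
  exact ⟨e L, fun n => by
    simpa [Submodule.map_smul'', LinearEquiv.range] using (hL n).map (e : M →ₗ[R] N)⟩

theorem IsPrecomplete.of_pow_le [IsPrecomplete I M] {a b : ℕ} (hIJ : I ^ a ≤ J)
    (hJI : J ^ b ≤ I) : IsPrecomplete J M := by
  have hle {K L : Ideal R} {c : ℕ} (h : K ^ c ≤ L) (k : ℕ) :
      K ^ ((c + 1) * k) • (⊤ : Submodule R M) ≤ L ^ k • ⊤ := by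
    refine Submodule.smul_mono_left ?_
    rw [pow_mul]
    exact Ideal.pow_right_mono ((Ideal.pow_le_pow_right (Nat.le_succ c)).trans h) k
  refine ⟨fun f hf => ?_⟩
  obtain ⟨L, hL⟩ := IsPrecomplete.prec (I := I) inferInstance (f := fun k => f ((b + 1) * k))
    fun hkl => (hf (Nat.mul_le_mul_left _ hkl)).mono (hle hJI _)
  refine ⟨L, fun n => ?_⟩
  have hn : n ≤ (b + 1) * ((a + 1) * n) :=
    (Nat.le_mul_of_pos_left n a.succ_pos).trans (Nat.le_mul_of_pos_left _ b.succ_pos)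
  exact (hf hn).trans ((hL ((a + 1) * n)).mono (hle hIJ n))

end AdicComparison

theorem exists_isIdempotentElem_pow {M : Type*} [Monoid M] [Finite M] (x : M) :
    ∃ m, 0 < m ∧ IsIdempotentElem (x ^ m) := by
  obtain ⟨n, c, hc, hnc⟩ : ∃ n c, 0 < c ∧ x ^ (n + c) = x ^ n := by
    obtain ⟨i, j, hij, h⟩ := Finite.exists_ne_map_eq_of_infinite fun k : ℕ => x ^ k
    rcases hij.lt_or_gt with hlt | hlt
    · exact ⟨i, j - i, by omega, by rw [Nat.add_sub_cancel' hlt.le]; exact h.symm⟩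
    · exact ⟨j, i - j, by omega, by rw [Nat.add_sub_cancel' hlt.le]; exact h⟩
  have hper (t : ℕ) : x ^ (n + t * c) = x ^ n := by
    induction t with
    | zero => simp
    | succ t ih => rw [add_mul, one_mul, ← add_assoc, pow_add, ih, ← pow_add, hnc]
  refine ⟨(n + 1) * c, by positivity, ?_⟩
  have hn : n ≤ (n + 1) * c := by nlinarith
  calc x ^ ((n + 1) * c) * x ^ ((n + 1) * c)
      = x ^ ((n + 1) * c - n) * x ^ (n + (n + 1) * c) := by
        rw [← pow_add, ← pow_add]; congr 1; omega
    _ = x ^ ((n + 1) * c) := by rw [hper, ← pow_add, Nat.sub_add_cancel hn]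

section Henselian

variable {R : Type*} [CommRing R] [IsDomain R] {I : Ideal R} [HenselianRing R I]

theorem HenselianRing.mem_or_sub_one_mem_of_mul_self_sub_mem {e : R} (he : e * e - e ∈ I) :
    e ∈ I ∨ e - 1 ∈ I := by
  have hunit : IsUnit (Ideal.Quotient.mk I (2 * e - 1)) := by
    refine IsUnit.of_mul_eq_one (Ideal.Quotient.mk I (2 * e - 1)) ?_
    rw [← map_mul, ← map_one (Ideal.Quotient.mk I), Ideal.Quotient.eq]
    convert I.mul_mem_left 4 he using 1
    ring
  obtain ⟨s, hs, hse⟩ := HenselianRing.is_henselian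
    (Polynomial.X ^ 2 - Polynomial.X : Polynomial R) (Polynomial.monic_X_pow_sub (by simp)) e
    (by simpa [sq] using he) (by
      convert hunit using 2
      simp only [Polynomial.derivative_sub, Polynomial.derivative_X_pow, Polynomial.derivative_X,
        Polynomial.eval_sub, Polynomial.eval_mul, Polynomial.eval_C, Polynomial.eval_pow,
        Polynomial.eval_X, Polynomial.eval_one]
      norm_num)
  have hs : s * (s - 1) = 0 := by
    simp only [Polynomial.IsRoot, Polynomial.eval_sub, Polynomial.eval_pow, Polynomial.eval_X] at hs
    linear_combination hs
  rcases mul_eq_zero.1 hs with rfl | hs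
  · left
    simpa using I.neg_mem hse
  · right
    rw [sub_eq_zero] at hs
    subst hs
    simpa using I.neg_mem hse

theorem HenselianRing.exists_pow_mem_of_not_isUnit [Finite (R ⧸ I)] {x : R} (hx : ¬IsUnit x) :
    ∃ m, x ^ m ∈ I := by
  obtain ⟨m, hm, he⟩ := exists_isIdempotentElem_pow (Ideal.Quotient.mk I x)
  have he : x ^ m * x ^ m - x ^ m ∈ I := by
    rw [← Ideal.Quotient.eq_zero_iff_mem, map_sub, map_mul, map_pow, he.eq, sub_self]
  refine (mem_or_sub_one_mem_of_mul_self_sub_mem he).elim (fun h => ⟨m, h⟩) fun h => ?_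
  have := Ideal.mem_jacobson_bot.1 (HenselianRing.jac h) 1
  rw [mul_one, sub_add_cancel, isUnit_pow_iff hm.ne'] at this
  exact absurd this hx

end Henselian

namespace PadicInt

variable {p : ℕ} [Fact p.Prime]

instance hasFiniteQuotients : Ring.HasFiniteQuotients ℤ_[p] where
  finiteQuotient {I} hI := by
    obtain ⟨n, rfl⟩ := ideal_eq_span_pow_p hI
    have : NeZero (p ^ n) := ⟨pow_ne_zero n (Fact.out : p.Prime).ne_zero⟩
    rw [← ker_toZModPow]
    exact Finite.of_equiv _
      (RingHom.quotientKerEquivOfSurjective (ZMod.ringHom_surjective (toZModPow n))).symm.toEquiv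

instance isPrecomplete_span_p : IsPrecomplete (Ideal.span {(p : ℤ_[p])}) ℤ_[p] :=
  maximalIdeal_eq_span_p (p := p) ▸ inferInstance

variable {B : Type*} [CommRing B] [Algebra ℤ_[p] B] [Module.Finite ℤ_[p] B]

theorem exists_pow_mem_of_ne_bot [IsDomain B] {P : Ideal B} (hP : P ≠ ⊥) :
    ∃ v, (p : B) ^ v ∈ P := by
  obtain ⟨v, hv⟩ := ideal_eq_span_pow_p (Ideal.under_ne_bot ℤ_[p] hP)
  refine ⟨v, ?_⟩
  have : (p : ℤ_[p]) ^ v ∈ P.under ℤ_[p] := hv ▸ Ideal.mem_span_singleton_self _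
  simpa using this

variable [FaithfulSMul ℤ_[p] B]

theorem span_p_ne_top : Ideal.span {(p : B)} ≠ ⊤ := by
  have h := (Ideal.map_eq_top_iff (algebraMap ℤ_[p] B) (I := IsLocalRing.maximalIdeal ℤ_[p])
    (FaithfulSMul.algebraMap_injective _ _) Algebra.IsIntegral.isIntegral).not.2
    (Ideal.IsMaximal.ne_top inferInstance)
  simpa [maximalIdeal_eq_span_p, Ideal.map_span] using h

theorem isAdicComplete_span_p [IsDomain B] : IsAdicComplete (Ideal.span {(p : B)}) B := by
  have := Ring.HasFiniteQuotients.of_module_finite ℤ_[p] B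
  have : IsPrecomplete (Ideal.span {(p : ℤ_[p])}) B :=
    .of_linearEquiv (Module.Free.chooseBasis ℤ_[p] B).equivFun.symm
  have : IsPrecomplete (Ideal.span {(p : B)}) B := by
    simpa [Ideal.map_span] using IsPrecomplete.map_algebraMap_iff.2 this
  exact { IsHausdorff.of_isDomain _ span_p_ne_top with }

end PadicInt

theorem PadicInt.isAdicComplete_span_of_ne_zero_of_not_isUnit (p : ℕ) [Fact p.Prime] {B : Type*}
    [CommRing B] [IsDomain B] [Algebra ℤ_[p] B] [Module.Finite ℤ_[p] B] [FaithfulSMul ℤ_[p] B]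
    {π : B} (hπ₀ : π ≠ 0) (hπ : ¬IsUnit π) : IsAdicComplete (Ideal.span {π}) B := by
  have := Ring.HasFiniteQuotients.of_module_finite ℤ_[p] B
  have := isAdicComplete_span_p (p := p) (B := B)
  have hp : (p : B) ≠ 0 := by
    simpa using (FaithfulSMul.algebraMap_injective ℤ_[p] B).ne
      (Nat.cast_ne_zero.2 (Fact.out : p.Prime).ne_zero)
  have : Finite (B ⧸ Ideal.span {(p : B)}) :=
    Ring.HasFiniteQuotients.finiteQuotient (by simpa using hp)
  obtain ⟨m, hm⟩ := HenselianRing.exists_pow_mem_of_not_isUnit (I := Ideal.span {(p : B)}) hπ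
  obtain ⟨v, hv⟩ :=
    exists_pow_mem_of_ne_bot (p := p) (P := Ideal.span {π}) (by simpa using hπ₀)
  have : IsPrecomplete (Ideal.span {π}) B :=
    .of_pow_le (I := Ideal.span {(p : B)})
      (by rwa [Ideal.span_singleton_pow, Ideal.span_singleton_le_iff_mem])
      (by rwa [Ideal.span_singleton_pow, Ideal.span_singleton_le_iff_mem])
  exact { IsHausdorff.of_isDomain _ (by simpa using hπ) with }

/-- With `φ(f)(X) = f(πX + X^q)`, the ring `o_F[[X]]` is free over `φ(o_F[[X]])`
with basis `1, X, …, X^(q-1)`: every `f` is uniquely `∑ i, X^i φ(f_i)`. -/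
theorem stmt7 (p : ℕ) [Fact p.Prime] (F : Type*) [Field F] [Algebra ℚ_[p] F]
    [FiniteDimensional ℚ_[p] F] [Algebra ℤ_[p] F] [IsScalarTower ℤ_[p] ℚ_[p] F]
    (O : Subalgebra ℤ_[p] F) (hO : O = integralClosure ℤ_[p] F)
    (π : ↥O) (hπ : Irreducible π) (q : ℕ)
    (hq : Nat.card (↥O ⧸ Ideal.span {π}) = q) :
    ∀ f : PowerSeries ↥O, ∃! fi : Fin q → PowerSeries ↥O,
      f = ∑ i : Fin q, PowerSeries.X ^ (i : ℕ) *
        PSComp (fi i) (PowerSeries.C (R := ↥O) π * PowerSeries.X + PowerSeries.X ^ q) := by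
  subst hO
  have : Module.IsTorsionFree ℤ_[p] F := .trans_faithfulSMul ℤ_[p] ℚ_[p] F
  have : Module.Finite ℤ_[p] (integralClosure ℤ_[p] F) :=
    IsIntegralClosure.finite ℤ_[p] ℚ_[p] F _
  have := PadicInt.isAdicComplete_span_of_ne_zero_of_not_isUnit p hπ.ne_zero hπ.not_isUnit
  have := Ring.HasFiniteQuotients.of_module_finite ℤ_[p] (integralClosure ℤ_[p] F)
  have : Finite (integralClosure ℤ_[p] F ⧸ Ideal.span {π}) :=
    Ring.HasFiniteQuotients.finiteQuotient (by simpa using hπ.ne_zero)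
  have hg : map (Ideal.Quotient.mk (Ideal.span {π})) (C π * X + X ^ q) = X ^ q := by
    simp [Ideal.Quotient.eq_zero_iff_mem.2 (Ideal.mem_span_singleton_self π)]
  intro f
  simpa [sumXPowComp_apply, eq_comm] using (sumXPowComp_bijective
    (IsSMulRegular.of_ne_zero hπ.ne_zero) (hq ▸ Nat.card_pos) hg).existsUnique f
end

section
/- Let $F$ be a finite extension of $\mathbf{Q}_p$ with ring of integers $o_F$, uniformizer $p$, residue cardinality $q = p^2$ (e.g. $F = \mathbf{Q}_{p^2}$), and Lubin--Tate group with $[p](X) = pX + X^q$. Then $o_F[[X]]^{\psi = 0} = \left(\bigoplus_{i=1}^{q-2} X^i\,\phi(o_F[[X]])\right) \oplus \left(pX^{q-1} - (1-q)\right)\phi(o_F[[X]])$. -/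
/-!
Write `f = ∑_{i<q} X^i φ(f_i)`. The coordinates `f_i` are unique: modulo `π` the map `φ` becomes
`h ↦ h(X^q)`, so a vanishing combination has all `f_i` divisible by `π`, hence by every power of
`π`, and `o_F` is `π`-adically separated. Since `X^q φ(h) = φ(X h) - π X φ(h)`, the `i`-th
coordinate of `X^i f` is `f_0 - [1 ≤ i] π f_{q-1}`, so `π ψ(f) = q f_0 - (q - 1) π f_{q-1}`, and as
`q = π²`, `ψ(f) = π f_0 - (q - 1) f_{q-1}`. Thus `ψ(f) = 0` exactly when
`(f_0, f_{q-1}) = ((q - 1) w, π w)` for some `w`, namely `w = π f_{q-1} - f_0` (because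
`π² - (q - 1) = 1`), which says that `f` lies in the asserted direct sum.
-/

open PowerSeries

open Finset

section General

variable {R : Type*} [CommRing R]

theorem PowerSeries.coeff_pow_eq_zero_of_lt {g : R⟦X⟧} (hg : constantCoeff g = 0) {m n : ℕ}
    (h : m < n) : coeff m (g ^ n) = 0 :=
  X_pow_dvd_iff.1 (pow_dvd_pow_of_dvd (X_dvd_iff.2 hg) n) m h

theorem PSComp_eq_subst (f : R⟦X⟧) {g : R⟦X⟧} (hg : constantCoeff g = 0) :
    PSComp f g = f.subst g := by
  ext m
  rw [coeff_subst' (HasSubst.of_constantCoeff_zero' hg),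
    finsum_eq_sum_of_support_subset (s := range (m + 1))]
  · simp only [PSComp, coeff_mk, coeff_C_mul, smul_eq_mul]
  · intro d hd
    by_contra hdm
    simp only [coe_range, Set.mem_Iio, not_lt] at hdm
    exact hd (by simp only [coeff_pow_eq_zero_of_lt hg (by omega : m < d), smul_zero])

theorem PowerSeries.exists_eq_C_mul_of_dvd_coeff {a : R} {f : R⟦X⟧} (h : ∀ m, a ∣ coeff m f) :
    ∃ f', f = C a * f' :=
  ⟨mk fun m => (h m).choose, by ext m; rw [coeff_C_mul, coeff_mk]; exact (h m).choose_spec⟩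

theorem PowerSeries.coeff_sum_X_pow_mul_subst_X_pow {q : ℕ} [NeZero q] (h : ℕ → R⟦X⟧) {j : ℕ}
    (hj : j < q) (m : ℕ) :
    coeff (j + q * m) (∑ i ∈ range q, X ^ i * subst (X ^ q : R⟦X⟧) (h i)) = coeff m (h j) := by
  rw [map_sum, sum_eq_single_of_mem j (mem_range.2 hj)]
  · rw [coeff_X_pow_mul', if_pos (by omega), coeff_subst_X_pow (NeZero.ne q),
      Nat.add_sub_cancel_left, if_pos (dvd_mul_right q m), Nat.mul_div_cancel_left m (NeZero.pos q),
      Algebra.algebraMap_self, RingHom.id_apply]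
  · intro i hi hij
    rw [coeff_X_pow_mul', coeff_subst_X_pow (NeZero.ne q)]
    split_ifs with hle hdvd
    · obtain ⟨c, hc⟩ := hdvd
      have hmod : (j + q * m) % q = (i + q * c) % q := by rw [← hc]; congr 1; omega
      rw [Nat.add_mul_mod_self_left, Nat.add_mul_mod_self_left, Nat.mod_eq_of_lt hj,
        Nat.mod_eq_of_lt (mem_range.1 hi)] at hmod
      exact absurd hmod.symm hij
    all_goals rfl

end General

section ExtendByZero

variable {M : Type*} [Zero M] {n : ℕ}

def extendByZero (v : Fin n → M) (k : ℕ) : M :=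
  if h : k < n then v ⟨k, h⟩ else 0

theorem extendByZero_coe (v : Fin n → M) (i : Fin n) : extendByZero v i = v i :=
  dif_pos i.isLt

theorem sum_fin_eq_sum_range_extendByZero {N : Type*} [AddCommMonoid N] (F : ℕ → M → N)
    (v : Fin n → M) : ∑ i : Fin n, F i (v i) = ∑ k ∈ range n, F k (extendByZero v k) := by
  rw [← Fin.sum_univ_eq_sum_range (fun k => F k (extendByZero v k))]
  simp only [extendByZero_coe]

end ExtendByZero

namespace LubinTate

variable {R : Type*} [CommRing R] (π : R) (q : ℕ)

section Coordinates

variable [NeZero q]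

theorem constantCoeff_C_mul_X_add_X_pow : constantCoeff (C π * X + X ^ q : R⟦X⟧) = 0 := by
  simp [NeZero.ne q]

noncomputable def phi : R⟦X⟧ →ₐ[R] R⟦X⟧ :=
  substAlgHom (HasSubst.of_constantCoeff_zero' (constantCoeff_C_mul_X_add_X_pow π q))

theorem PSComp_eq_phi (f : R⟦X⟧) : PSComp f (C π * X + X ^ q) = phi π q f := by
  rw [phi, coe_substAlgHom, PSComp_eq_subst f (constantCoeff_C_mul_X_add_X_pow π q)]

theorem phi_X : phi π q X = C π * X + X ^ q := substAlgHom_X _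

theorem phi_C (a : R) : phi π q (C a) = C a := by
  simpa using (phi π q).commutes a

theorem map_phi {S : Type*} [CommRing S] (φ : R →+* S) (hφ : φ π = 0) (h : R⟦X⟧) :
    map φ (phi π q h) = subst (X ^ q : S⟦X⟧) (map φ h) := by
  have hmap := map_subst (HasSubst.of_constantCoeff_zero' (constantCoeff_C_mul_X_add_X_pow π q))
    (h := φ) h
  change map φ _ = subst (map φ (C π * X + X ^ q)) (map φ h) at hmap
  rw [phi, coe_substAlgHom, hmap]
  simp [hφ]

/-- Coordinates are indexed by `ℕ`; the entries from index `q` on are ignored. -/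
noncomputable def ofCoords (g : ℕ → R⟦X⟧) : R⟦X⟧ := ∑ i ∈ range q, X ^ i * phi π q (g i)

theorem ofCoords_extendByZero (v : Fin q → R⟦X⟧) :
    ofCoords π q (extendByZero v) = ∑ i : Fin q, X ^ (i : ℕ) * PSComp (v i) (C π * X + X ^ q) := by
  rw [ofCoords, ← sum_fin_eq_sum_range_extendByZero (fun i w => X ^ i * phi π q w)]
  simp only [PSComp_eq_phi]

theorem ofCoords_congr {g h : ℕ → R⟦X⟧} (hgh : ∀ k < q, g k = h k) :
    ofCoords π q g = ofCoords π q h :=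
  sum_congr rfl fun k hk => by rw [hgh k (mem_range.1 hk)]

theorem ofCoords_sub (g h : ℕ → R⟦X⟧) :
    ofCoords π q (g - h) = ofCoords π q g - ofCoords π q h := by
  simp only [ofCoords, Pi.sub_apply, map_sub, mul_sub, sum_sub_distrib]

theorem ofCoords_sum {ι : Type*} (s : Finset ι) (v : ι → ℕ → R⟦X⟧) :
    ofCoords π q (∑ j ∈ s, v j) = ∑ j ∈ s, ofCoords π q (v j) := by
  simp only [ofCoords, Finset.sum_apply, map_sum, mul_sum]
  exact sum_comm

theorem ofCoords_single {n : ℕ} (hn : n < q) (h : R⟦X⟧) :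
    ofCoords π q (Pi.single n h) = X ^ n * phi π q h := by
  rw [ofCoords, sum_eq_single_of_mem n (mem_range.2 hn)]
  · rw [Pi.single_eq_same]
  · intro j _ hj
    rw [Pi.single_eq_of_ne hj, map_zero, mul_zero]

theorem X_pow_add_mul_phi {n : ℕ} (hn : n + 1 < q) (h : R⟦X⟧) :
    X ^ (q + n) * phi π q h =
      ofCoords π q (Pi.single n (X * h) - Pi.single (n + 1) (C π * h)) := by
  rw [ofCoords_sub, ofCoords_single π q (by omega), ofCoords_single π q hn, map_mul, map_mul,
    phi_X, phi_C]
  ring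

noncomputable def mulXPowCoords (i : ℕ) (g : ℕ → R⟦X⟧) : ℕ → R⟦X⟧ :=
  ∑ j ∈ range q, if i + j < q then Pi.single (i + j) (g j)
    else Pi.single (i + j - q) (X * g j) - Pi.single (i + j - q + 1) (C π * g j)

theorem X_pow_mul_ofCoords {i : ℕ} (hi : i < q) (g : ℕ → R⟦X⟧) :
    X ^ i * ofCoords π q g = ofCoords π q (mulXPowCoords π q i g) := by
  rw [ofCoords, mulXPowCoords, ofCoords_sum, mul_sum]
  refine sum_congr rfl fun j hj => ?_
  rw [mem_range] at hj
  split_ifs with hij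
  · rw [ofCoords_single π q hij, pow_add, mul_assoc]
  · rw [← X_pow_add_mul_phi π q (by omega), ← mul_assoc, ← pow_add]
    congr 2
    omega

theorem mulXPowCoords_apply_self {i : ℕ} (hi : i < q) (g : ℕ → R⟦X⟧) :
    mulXPowCoords π q i g i = g 0 - if 1 ≤ i then C π * g (q - 1) else 0 := by
  have hterm : ∀ j ∈ range q, (if i + j < q then Pi.single (i + j) (g j)
      else Pi.single (i + j - q) (X * g j) - Pi.single (i + j - q + 1) (C π * g j) : ℕ → R⟦X⟧) i =
      (if j = 0 then g 0 else 0) - if j = q - 1 then (if 1 ≤ i then C π * g (q - 1) else 0)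
        else 0 := by
    intro j hj
    rw [mem_range] at hj
    by_cases hij : i + j < q
    · simp only [if_pos hij, Pi.single_apply]
      split_ifs <;> first | omega | (subst_vars; simp)
    · simp only [if_neg hij, Pi.sub_apply, Pi.single_apply]
      split_ifs <;> first | omega | (subst_vars; simp)
  rw [mulXPowCoords, Finset.sum_apply, sum_congr rfl hterm, sum_sub_distrib, sum_ite_eq',
    sum_ite_eq', if_pos (mem_range.2 (NeZero.pos q)), if_pos (mem_range.2 (by omega))]

/-- Modulo `π`, `φ` is `h ↦ h(X^q)`, and then the `m`-th coefficient of `g i` is read off at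
`X^(i + q m)`. -/
theorem dvd_coeff_of_ofCoords_eq_zero {g : ℕ → R⟦X⟧} (hg : ofCoords π q g = 0) {i : ℕ}
    (hi : i < q) (m : ℕ) : π ∣ coeff m (g i) := by
  have h := congrArg (coeff (i + q * m) ∘ map (Ideal.Quotient.mk (Ideal.span {π}))) hg
  simp only [Function.comp_apply, ofCoords, map_sum, map_mul, map_pow, map_X,
    map_phi π q _ (Ideal.Quotient.mk_singleton_self π), coeff_sum_X_pow_mul_subst_X_pow _ hi,
    coeff_map, map_zero] at h
  exact Ideal.mem_span_singleton.1 (Ideal.Quotient.eq_zero_iff_mem.1 h)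

theorem pow_dvd_coeff_of_ofCoords_eq_zero [IsDomain R] (hπ : π ≠ 0) (n : ℕ) :
    ∀ g : ℕ → R⟦X⟧, ofCoords π q g = 0 → ∀ i < q, ∀ m, π ^ n ∣ coeff m (g i) := by
  induction n with
  | zero => simp
  | succ n ih =>
    intro g hg i hi m
    have hdiv (j : ℕ) : ∃ f', j < q → g j = C π * f' := by
      by_cases hj : j < q
      · obtain ⟨f', hf'⟩ := exists_eq_C_mul_of_dvd_coeff (dvd_coeff_of_ofCoords_eq_zero π q hg hj)
        exact ⟨f', fun _ => hf'⟩
      · exact ⟨0, fun h => absurd h hj⟩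
    choose g' hg' using hdiv
    have hg'0 : ofCoords π q g' = 0 := by
      have hfactor : ofCoords π q g = C π * ofCoords π q g' := by
        simp only [ofCoords, mul_sum]
        refine sum_congr rfl fun j hj => ?_
        rw [hg' j (mem_range.1 hj), map_mul, phi_C]
        ring
      rw [hfactor] at hg
      exact (mul_eq_zero.1 hg).resolve_left ((map_ne_zero_iff _ C_injective).2 hπ)
    rw [hg' i hi, coeff_C_mul, pow_succ']
    exact mul_dvd_mul_left π (ih g' hg'0 i hi m)

def CoordsUnique : Prop :=
  ∀ g h : ℕ → R⟦X⟧, ofCoords π q g = ofCoords π q h → ∀ i < q, g i = h i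

theorem coordsUnique [IsDomain R] [WfDvdMonoid R] (hπ : ¬IsUnit π) (hπ0 : π ≠ 0) :
    CoordsUnique π q := by
  intro g h hgh i hi
  rw [← sub_eq_zero]
  ext m
  rw [map_zero]
  by_contra hne
  obtain ⟨n, hn⟩ := FiniteMultiplicity.of_not_isUnit hπ hne
  have hz : ofCoords π q (g - h) = 0 := by rw [ofCoords_sub, hgh, sub_self]
  exact hn (pow_dvd_coeff_of_ofCoords_eq_zero π q hπ0 (n + 1) _ hz i hi m)

variable {π q}

theorem coords_X_pow_mul_apply_self (huniq : CoordsUnique π q) {i : ℕ} (hi : i < q)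
    {g g' : ℕ → R⟦X⟧} (h : ofCoords π q g' = X ^ i * ofCoords π q g) :
    g' i = g 0 - if 1 ≤ i then C π * g (q - 1) else 0 := by
  rw [X_pow_mul_ofCoords π q hi] at h
  rw [huniq _ _ h i hi, mulXPowCoords_apply_self π q hi]

theorem sum_coords_X_pow_mul_self (huniq : CoordsUnique π q) (coords : R⟦X⟧ → ℕ → R⟦X⟧)
    (hc : ∀ f, ofCoords π q (coords f) = f) (f : R⟦X⟧) :
    ∑ i ∈ range q, coords (X ^ i * f) i =
      q * coords f 0 - (q - 1) * (C π * coords f (q - 1)) := by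
  have hdiag (i : ℕ) (hi : i ∈ range q) :=
    coords_X_pow_mul_apply_self huniq (mem_range.1 hi) (g := coords f)
      (g' := coords (X ^ i * f)) (by rw [hc, hc])
  obtain ⟨n, rfl⟩ : ∃ n, q = n + 1 := ⟨q - 1, by have := NeZero.pos q; omega⟩
  have hcount (a : R⟦X⟧) : ∑ i ∈ range (n + 1), (if 1 ≤ i then a else 0) = n * a := by
    simp [sum_range_succ']
  rw [sum_congr rfl hdiag, sum_sub_distrib, hcount, sum_const, card_range, nsmul_eq_mul]
  push_cast
  ring

theorem eq_of_C_mul_eq_sum_coords [IsDomain R] (huniq : CoordsUnique π q) (hπ0 : π ≠ 0)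
    (hqπ : (q : R) = π ^ 2) (coords : R⟦X⟧ → ℕ → R⟦X⟧) (hc : ∀ f, ofCoords π q (coords f) = f)
    {f ψf : R⟦X⟧} (h : C π * ψf = ∑ i ∈ range q, coords (X ^ i * f) i) :
    ψf = C π * coords f 0 - C ((q : R) - 1) * coords f (q - 1) := by
  apply mul_left_cancel₀ ((map_ne_zero_iff _ C_injective).2 hπ0)
  have hqC : (q : R⟦X⟧) = C π ^ 2 := by rw [← map_natCast C, hqπ, map_pow]
  have hqC' : C ((q : R) - 1) = C π ^ 2 - 1 := by rw [hqπ, map_sub, map_pow, map_one]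
  rw [h, sum_coords_X_pow_mul_self huniq _ hc, hqC, hqC']
  ring

end Coordinates

section Kernel

/-- The coordinates of `∑_{i < q-1} b_i φ(v_i)`, where `b_i = X^(i+1)` for `i < q - 2` and
`b_(q-2) = π X^(q-1) + (q - 1)`. -/
noncomputable def kernelCoords (v : ℕ → R⟦X⟧) (k : ℕ) : R⟦X⟧ :=
  if k = 0 then C ((q : R) - 1) * v (q - 2) else if k = q - 1 then C π * v (q - 2) else v (k - 1)

theorem kernelCoords_zero (v : ℕ → R⟦X⟧) :
    kernelCoords π q v 0 = C ((q : R) - 1) * v (q - 2) :=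
  if_pos rfl

theorem kernelCoords_last (hq : 2 ≤ q) (v : ℕ → R⟦X⟧) :
    kernelCoords π q v (q - 1) = C π * v (q - 2) := by
  rw [kernelCoords, if_neg (by omega), if_pos rfl]

theorem kernelCoords_succ {k : ℕ} (hk : k + 2 < q) (v : ℕ → R⟦X⟧) :
    kernelCoords π q v (k + 1) = v k := by
  rw [kernelCoords, if_neg (by omega), if_neg (by omega), Nat.add_sub_cancel]

theorem eq_of_kernelCoords_eq (hq : 2 ≤ q) (hqπ : (q : R) = π ^ 2) {v w : ℕ → R⟦X⟧}
    (h : ∀ k < q, kernelCoords π q v k = kernelCoords π q w k) {i : ℕ} (hi : i < q - 1) :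
    v i = w i := by
  by_cases hlast : i = q - 2
  · have h0 := h 0 (by omega)
    have h1 := h (q - 1) (by omega)
    rw [kernelCoords_zero, kernelCoords_zero, hqπ, map_sub, map_pow, map_one] at h0
    rw [kernelCoords_last π q hq, kernelCoords_last π q hq] at h1
    subst hlast
    linear_combination C π * h1 - h0
  · rw [← kernelCoords_succ π q (by omega) v, ← kernelCoords_succ π q (by omega) w]
    exact h (i + 1) (by omega)

variable [NeZero q]

theorem sum_kernelBasis_eq_ofCoords (hq : 2 ≤ q) (v : ℕ → R⟦X⟧) :
    ∑ i ∈ range (q - 1), (if i + 1 ≤ q - 2 then X ^ (i + 1) else C π * X ^ (q - 1) - C (1 - (q : R)))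
      * phi π q (v i) = ofCoords π q (kernelCoords π q v) := by
  obtain ⟨n, rfl⟩ : ∃ n, q = n + 2 := ⟨q - 2, by omega⟩
  have hmid : ∀ k ∈ range n, (if k + 1 ≤ n then X ^ (k + 1) else
      C π * X ^ (n + 1) - C (1 - ((n + 2 : ℕ) : R))) * phi π (n + 2) (v k) =
      X ^ (k + 1) * phi π (n + 2) (kernelCoords π (n + 2) v (k + 1)) := by
    intro k hk
    rw [mem_range] at hk
    rw [if_pos (by omega), kernelCoords_succ π _ (by omega)]
  have h0 : kernelCoords π (n + 2) v 0 = C ((n + 2 : ℕ) - 1 : R) * v n := by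
    rw [kernelCoords_zero, Nat.add_sub_cancel]
  have hlast : kernelCoords π (n + 2) v (n + 1) = C π * v n := by
    rw [show n + 1 = n + 2 - 1 by omega, kernelCoords_last π _ hq, Nat.add_sub_cancel]
  simp only [ofCoords, Nat.add_sub_cancel, show n + 2 - 1 = n + 1 by omega]
  rw [sum_range_succ, sum_range_succ, sum_range_succ', sum_congr rfl hmid, if_neg (by omega), h0,
    hlast]
  simp only [map_mul, phi_C, map_sub, map_one, map_natCast]
  ring

variable {π q}

theorem C_mul_coord_zero_eq_iff_existsUnique (huniq : CoordsUnique π q) (hq : 2 ≤ q)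
    (hqπ : (q : R) = π ^ 2) (g : ℕ → R⟦X⟧) :
    C π * g 0 = C ((q : R) - 1) * g (q - 1) ↔
      ∃! u : Fin (q - 1) → R⟦X⟧, ofCoords π q g = ∑ i : Fin (q - 1),
        (if (i : ℕ) + 1 ≤ q - 2 then X ^ ((i : ℕ) + 1) else C π * X ^ (q - 1) - C (1 - (q : R))) *
          PSComp (u i) (C π * X + X ^ q) := by
  have hC : C ((q : R) - 1) = C π * C π - 1 := by rw [hqπ, map_sub, map_pow, map_one, sq]
  have hrepr (u : Fin (q - 1) → R⟦X⟧) : (ofCoords π q g = ∑ i : Fin (q - 1),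
      (if (i : ℕ) + 1 ≤ q - 2 then X ^ ((i : ℕ) + 1) else C π * X ^ (q - 1) - C (1 - (q : R))) *
        PSComp (u i) (C π * X + X ^ q)) ↔ ∀ k < q, g k = kernelCoords π q (extendByZero u) k := by
    simp only [PSComp_eq_phi]
    rw [sum_fin_eq_sum_range_extendByZero (fun i w => (if i + 1 ≤ q - 2 then X ^ (i + 1)
      else C π * X ^ (q - 1) - C (1 - (q : R))) * phi π q w), sum_kernelBasis_eq_ofCoords π q hq]
    exact ⟨huniq _ _, ofCoords_congr π q⟩
  simp only [hrepr]
  constructor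
  · intro hrel
    rw [hC] at hrel
    let u : Fin (q - 1) → R⟦X⟧ := fun i => if (i : ℕ) = q - 2 then C π * g (q - 1) - g 0
      else g (i + 1)
    have hw : extendByZero u (q - 2) = C π * g (q - 1) - g 0 := by
      rw [extendByZero, dif_pos (by omega)]
      exact if_pos rfl
    have hu : ∀ k < q, g k = kernelCoords π q (extendByZero u) k := by
      intro k hk
      obtain rfl | hk0 := Nat.eq_zero_or_pos k
      · rw [kernelCoords_zero, hw, hC]
        linear_combination C π * hrel
      obtain rfl | hklast := eq_or_ne k (q - 1)
      · rw [kernelCoords_last π q hq, hw]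
        linear_combination hrel
      obtain ⟨j, rfl⟩ : ∃ j, k = j + 1 := ⟨k - 1, by omega⟩
      rw [kernelCoords_succ π q (by omega), extendByZero, dif_pos (by omega)]
      exact (if_neg (by simp only; omega)).symm
    refine ⟨u, hu, fun v hv => funext fun i => ?_⟩
    rw [← extendByZero_coe v, ← extendByZero_coe u]
    exact eq_of_kernelCoords_eq π q hq hqπ (fun k hk => (hv k hk).symm.trans (hu k hk)) i.isLt
  · rintro ⟨u, hu, -⟩
    rw [hu 0 (by omega), hu (q - 1) (by omega), kernelCoords_zero, kernelCoords_last π q hq]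
    ring

end Kernel

end LubinTate

open LubinTate in
theorem stmt8_general (p : ℕ) [Fact p.Prime] (F : Type*) [Field F] [Algebra ℚ_[p] F]
    [FiniteDimensional ℚ_[p] F] [Algebra ℤ_[p] F] [IsScalarTower ℤ_[p] ℚ_[p] F]
    (O : Subalgebra ℤ_[p] F) (hO : O = integralClosure ℤ_[p] F)
    (hπ : Irreducible ((p : ℕ) : ↥O)) (q : ℕ) (hq2 : q = p ^ 2)
    -- `D f` is the (unique) decomposition of `f` in the basis `1, X, ..., X^(q-1)` of
    -- `↥O⟦X⟧` over `φ(↥O⟦X⟧)`, where `φ(h) = h(PowerSeries.C (R := ↥O) ((p : ℕ) : ↥O) * PowerSeries.X + PowerSeries.X ^ q)`: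
    (D : PowerSeries ↥O → Fin q → PowerSeries ↥O)
    (hD : ∀ f : PowerSeries ↥O,
      f = ∑ i : Fin q, PowerSeries.X ^ (i : ℕ) * PSComp (D f i) (PowerSeries.C (R := ↥O) ((p : ℕ) : ↥O) * PowerSeries.X + PowerSeries.X ^ q))
    -- `ψ` is characterized by `φ(ψ(f)) = (1/π)·Tr(f)`, i.e. `π·ψ(f)` is the sum of the
    -- diagonal entries of the matrix of multiplication by `f` in the above basis:
    (ψ : PowerSeries ↥O → PowerSeries ↥O)
    (hψ : ∀ f : PowerSeries ↥O,
      PowerSeries.C (R := ↥O) (((p : ℕ) : ↥O)) * ψ f = ∑ i : Fin q, D (PowerSeries.X ^ (i : ℕ) * f) i) :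
    ∀ f : PowerSeries ↥O, ψ f = 0 ↔
      ∃! u : Fin (q - 1) → PowerSeries ↥O,
        f = ∑ i : Fin (q - 1),
          (if (i : ℕ) + 1 ≤ q - 2 then PowerSeries.X ^ ((i : ℕ) + 1)
            else PowerSeries.C (R := ↥O) ((p : ℕ) : ↥O) * PowerSeries.X ^ (q - 1) -
              PowerSeries.C (R := ↥O) (1 - ((q : ℕ) : ↥O))) *
          PSComp (u i) (PowerSeries.C (R := ↥O) ((p : ℕ) : ↥O) * PowerSeries.X + PowerSeries.X ^ q) := by
  have hq : 2 ≤ q := hq2 ▸ (Fact.out : p.Prime).two_le.trans (Nat.le_self_pow two_ne_zero p)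
  have : NeZero q := ⟨by omega⟩
  have : IsNoetherianRing O :=
    hO ▸ IsIntegralClosure.isNoetherianRing ℤ_[p] ℚ_[p] F (integralClosure ℤ_[p] F)
  set π : O := ((p : ℕ) : O)
  have huniq : CoordsUnique π q := coordsUnique π q hπ.not_isUnit hπ.ne_zero
  have hc (f : O⟦X⟧) : ofCoords π q (extendByZero (D f)) = f := by
    rw [ofCoords_extendByZero, ← hD f]
  have hqπ : (q : O) = π ^ 2 := by rw [hq2]; push_cast; rfl
  have hψ' (f : O⟦X⟧) :
      ψ f = C π * extendByZero (D f) 0 - C ((q : O) - 1) * extendByZero (D f) (q - 1) := by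
    refine eq_of_C_mul_eq_sum_coords huniq hπ.ne_zero hqπ _ hc ?_
    rw [hψ, ← Fin.sum_univ_eq_sum_range]
    simp only [extendByZero_coe]
  intro f
  rw [hψ' f, sub_eq_zero, C_mul_coord_zero_eq_iff_existsUnique huniq hq hqπ, hc f]

/-- For `q = p^2`, uniformizer `p`, `[p](X) = pX + X^q`, the kernel of `ψ` is
`(⊕_(i=1)^(q-2) X^i φ(o_F[[X]])) ⊕ (pX^(q-1) - (1-q)) φ(o_F[[X]])`. -/
theorem stmt8 (p : ℕ) [Fact p.Prime] (F : Type*) [Field F] [Algebra ℚ_[p] F]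
    [FiniteDimensional ℚ_[p] F] [Algebra ℤ_[p] F] [IsScalarTower ℤ_[p] ℚ_[p] F]
    (O : Subalgebra ℤ_[p] F) (hO : O = integralClosure ℤ_[p] F)
    (hπ : Irreducible ((p : ℕ) : ↥O)) (q : ℕ) (hq2 : q = p ^ 2)
    (hq : Nat.card (↥O ⧸ Ideal.span {((p : ℕ) : ↥O)}) = q)
    -- `D f` is the (unique) decomposition of `f` in the basis `1, X, ..., X^(q-1)` of
    -- `↥O⟦X⟧` over `φ(↥O⟦X⟧)`, where `φ(h) = h(PowerSeries.C (R := ↥O) ((p : ℕ) : ↥O) * PowerSeries.X + PowerSeries.X ^ q)`: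
    (D : PowerSeries ↥O → Fin q → PowerSeries ↥O)
    (hD : ∀ f : PowerSeries ↥O,
      f = ∑ i : Fin q, PowerSeries.X ^ (i : ℕ) * PSComp (D f i) (PowerSeries.C (R := ↥O) ((p : ℕ) : ↥O) * PowerSeries.X + PowerSeries.X ^ q))
    -- `ψ` is characterized by `φ(ψ(f)) = (1/π)·Tr(f)`, i.e. `π·ψ(f)` is the sum of the
    -- diagonal entries of the matrix of multiplication by `f` in the above basis:
    (ψ : PowerSeries ↥O → PowerSeries ↥O)
    (hψ : ∀ f : PowerSeries ↥O,
      PowerSeries.C (R := ↥O) (((p : ℕ) : ↥O)) * ψ f = ∑ i : Fin q, D (PowerSeries.X ^ (i : ℕ) * f) i) :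
    ∀ f : PowerSeries ↥O, ψ f = 0 ↔
      ∃! u : Fin (q - 1) → PowerSeries ↥O,
        f = ∑ i : Fin (q - 1),
          (if (i : ℕ) + 1 ≤ q - 2 then PowerSeries.X ^ ((i : ℕ) + 1)
            else PowerSeries.C (R := ↥O) ((p : ℕ) : ↥O) * PowerSeries.X ^ (q - 1) -
              PowerSeries.C (R := ↥O) (1 - ((q : ℕ) : ↥O))) *
          PSComp (u i) (PowerSeries.C (R := ↥O) ((p : ℕ) : ↥O) * PowerSeries.X + PowerSeries.X ^ q) :=
  stmt8_general p F O hO hπ q hq2 D hD ψ hψ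
end
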